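/- arXiv:2507.23547 — 5 statements merged into one kernel-verified Lean document; each statement's English description precedes it below -/
import Mathlib

section
/- Let M_f be an n×n complex matrix, decomposed as M_f = H₁ + iH₂ with H₁ = (M_f + M_fᴴ)/2 and H₂ = (M_f − M_fᴴ)/(2i). If V_f : ℝ → ℂⁿ solves dV_f/dt = M_f V_f, then the warped phase transformation W(t, p) := e^{−p} V_f(t) satisfies the convection equation ∂_t W = −H₁ ∂_p W + iH₂ W for all t ∈ ℝ and p ∈ ℝ. -/
open scoped Matrix

open Complex in
theorem Complex.inv_two_smul_add_add_I_smul_inv_two_I_smul_sub {E : Type*} [AddCommGroup E]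
    [Module ℂ E] (a b : E) :
    (2 : ℂ)⁻¹ • (a + b) + I • (2 * I)⁻¹ • (a - b) = a := by
  have hI : I * (2 * I)⁻¹ = 2⁻¹ := by field_simp
  rw [smul_smul, hI, ← smul_add, add_add_sub_cancel, ← two_smul ℂ a, smul_smul,
    inv_mul_cancel₀ two_ne_zero, one_smul]

theorem hasDerivAt_exp_neg_smul {E : Type*} [NormedAddCommGroup E] [NormedSpace ℝ E]
    (v : E) (p : ℝ) :
    HasDerivAt (fun q => Real.exp (-q) • v) (-(Real.exp (-p) • v)) p := by
  simpa using ((Real.hasDerivAt_exp (-p)).comp p (hasDerivAt_neg p)).smul_const v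

/-- If `V_f` solves `dV_f/dt = M_f V_f` with `M_f = H₁ + iH₂` its Hermitian/anti-Hermitian
decomposition, then the warped phase transformation `W(t,p) = e^{−p} V_f(t)` satisfies
`∂_t W = −H₁ ∂_p W + iH₂ W`, where `∂_p W(t,p) = −e^{−p} V_f(t)`. -/
theorem warped_phase_transformation_convection {n : ℕ}
    (Mf H1 H2 : Matrix (Fin n) (Fin n) ℂ)
    (hH1 : H1 = (2 : ℂ)⁻¹ • (Mf + Mfᴴ))
    (hH2 : H2 = (2 * Complex.I)⁻¹ • (Mf - Mfᴴ))
    (Vf : ℝ → (Fin n → ℂ))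
    (hode : ∀ t : ℝ, HasDerivAt Vf (Mf.mulVec (Vf t)) t)
    (W : ℝ → ℝ → (Fin n → ℂ))
    (hW : ∀ t p : ℝ, W t p = Real.exp (-p) • Vf t) :
    ∀ t p : ℝ,
      HasDerivAt (fun q => W t q) (-(Real.exp (-p) • Vf t)) p ∧
      HasDerivAt (fun s => W s p)
        (-(H1.mulVec (-(Real.exp (-p) • Vf t))) + Complex.I • H2.mulVec (W t p)) t := by
  have hM : Mf = H1 + Complex.I • H2 := by
    rw [hH1, hH2, Complex.inv_two_smul_add_add_I_smul_inv_two_I_smul_sub]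
  intro t p
  simp only [hW]
  refine ⟨hasDerivAt_exp_neg_smul (Vf t) p, ?_⟩
  refine ((hode t).const_smul (Real.exp (-p))).congr_deriv ?_
  rw [Matrix.mulVec_neg, neg_neg, ← Matrix.mulVec_smul, hM, Matrix.add_mulVec,
    Matrix.smul_mulVec]
end

section
/- Let γ > 0, T > 0, and N ≥ 1. Let M_D be the 2N×2N block-diagonal matrix diag(0_N, −γ I_N) and let H₁ be the 4N×4N Hermitian matrix (1/2)[[2M_D, I_{2N}/T],[I_{2N}/T, 0]]. Then every eigenvalue λ of H₁ satisfies λ ≤ 1/(2T), and 1/(2T) is an eigenvalue of H₁; consequently the recovery threshold p^◇ = max{λ_max(H₁)T, 0} equals 1/2. -/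
/-!
Put `c = 1/(2T)`, so that `H₁ = [[M_D, c I], [c I, 0]]`. The Schur complement of the positive
definite block `c I` in `c I - H₁` is `-M_D = diag(0, γ I) ⪰ 0`, hence `H₁ ≤ c I` in the Loewner
order and every eigenvalue is at most `c`. Conversely, if `M_D u = 0` then `(u, u)` is an
eigenvector of `H₁` for `c`, and `ker M_D ≠ 0` because `N ≥ 1`. So `λ_max(H₁) T = 1/2`.
-/

open scoped MatrixOrder ComplexOrder
open Matrix

namespace Matrix

variable {m n 𝕜 : Type*} [RCLike 𝕜] [Fintype m] [Fintype n] [DecidableEq m] [DecidableEq n]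

theorem IsHermitian.eigenvalues_le_of_le_smul_one {A : Matrix n n 𝕜} (hA : A.IsHermitian) {c : ℝ}
    (h : A ≤ (c : 𝕜) • 1) (i : n) : hA.eigenvalues i ≤ c := by
  rw [← RCLike.real_smul_eq_coe_smul, ← Algebra.algebraMap_eq_smul_one] at h
  exact (le_algebraMap_iff_spectrum_le hA.isSelfAdjoint).1 h _ (hA.eigenvalues_mem_spectrum_real i)

theorem IsHermitian.exists_eigenvalues_eq_of_mulVec_eq {A : Matrix n n 𝕜} (hA : A.IsHermitian)
    {μ : ℝ} {v : n → 𝕜} (hv : v ≠ 0) (h : A *ᵥ v = (μ : 𝕜) • v) : ∃ i, hA.eigenvalues i = μ := by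
  have hμ : Module.End.HasEigenvalue (toLin' A) (μ : 𝕜) :=
    Module.End.hasEigenvalue_of_hasEigenvector ⟨Module.End.mem_eigenspace_iff.2 h, hv⟩
  have : μ ∈ spectrum ℝ A := spectrum.of_algebraMap_mem 𝕜 (spectrum_toLin' A ▸ hμ.mem_spectrum)
  rwa [hA.spectrum_real_eq_range_eigenvalues] at this

theorem fromBlocks_le_smul_one {A : Matrix m m 𝕜} (hA : A ≤ 0) {c : ℝ} (hc : 0 < c) :
    fromBlocks A ((c : 𝕜) • 1) ((c : 𝕜) • 1) 0 ≤ ((c : 𝕜) • 1 : Matrix (m ⊕ m) (m ⊕ m) 𝕜) := by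
  set D : Matrix m m 𝕜 := (c : 𝕜) • 1
  have hc' : (c : 𝕜) ≠ 0 := RCLike.ofReal_ne_zero.2 hc.ne'
  have : Invertible D := ⟨(c : 𝕜)⁻¹ • 1,
    by rw [smul_mul_smul_comm, inv_mul_cancel₀ hc', one_mul, one_smul],
    by rw [smul_mul_smul_comm, mul_inv_cancel₀ hc', one_mul, one_smul]⟩
  have hD_star : Dᴴ = D := by simp [D]
  have hblocks : (c : 𝕜) • 1 - fromBlocks A D D 0 = fromBlocks (D - A) (-D) (-D)ᴴ D := by
    rw [← fromBlocks_one, fromBlocks_smul, sub_eq_add_neg, sub_eq_add_neg, fromBlocks_neg,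
      fromBlocks_add, conjTranspose_neg, hD_star]
    simp [D]
  have hSchur : D - A - -D * D⁻¹ * (-D)ᴴ = -A := by
    rw [conjTranspose_neg, hD_star, neg_mul, neg_mul_neg, ← invOf_eq_nonsing_inv, mul_invOf_self,
      one_mul]
    abel
  have hD : D.PosDef := by simpa [D, RCLike.real_smul_eq_coe_smul] using PosDef.one.smul hc
  rw [le_iff, hblocks, PosDef.fromBlocks₂₂ _ _ hD, hSchur]
  rwa [le_iff, zero_sub] at hA

theorem fromBlocks_mulVec_elim_self {R : Type*} [CommSemiring R] {A : Matrix m m R} {u : m → R}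
    (hu : A *ᵥ u = 0) (c : R) :
    fromBlocks A (c • 1) (c • 1) 0 *ᵥ Sum.elim u u = c • Sum.elim u u := by
  ext (i | i) <;> simp [fromBlocks_mulVec, hu, smul_mulVec]

end Matrix

/-- For `H₁ = (1/2)[[2M_D, I/T],[I/T, 0]]` with `M_D = diag(0, −γI)`, `γ, T > 0`: all
eigenvalues of `H₁` are `≤ 1/(2T)`, the value `1/(2T)` is attained, and the recovery
threshold `p^◇ = max{λ_max(H₁) T, 0}` equals `1/2`. -/
theorem recovery_threshold_eq_half {N : ℕ} (hN : 1 ≤ N) (γ T : ℝ) (hγ : 0 < γ) (hT : 0 < T)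
    (MD : Matrix (Fin N ⊕ Fin N) (Fin N ⊕ Fin N) ℂ)
    (hMD : MD = Matrix.fromBlocks 0 0 0 ((-(γ : ℂ)) • 1))
    (H1 : Matrix ((Fin N ⊕ Fin N) ⊕ (Fin N ⊕ Fin N)) ((Fin N ⊕ Fin N) ⊕ (Fin N ⊕ Fin N)) ℂ)
    (hH1 : H1 = (2 : ℂ)⁻¹ • Matrix.fromBlocks ((2 : ℂ) • MD) ((T : ℂ)⁻¹ • 1) ((T : ℂ)⁻¹ • 1) 0)
    (hHerm : H1.IsHermitian) :
    (∀ i, hHerm.eigenvalues i ≤ 1 / (2 * T)) ∧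
    (∃ i, hHerm.eigenvalues i = 1 / (2 * T)) ∧
    max ((⨆ i, hHerm.eigenvalues i) * T) 0 = 1 / 2 := by
  set c : ℝ := 1 / (2 * T) with hc_def
  have hc : 0 < c := by positivity
  have hH : H1 = fromBlocks MD ((c : ℂ) • 1) ((c : ℂ) • 1) 0 := by
    rw [hH1, fromBlocks_smul, smul_smul, smul_zero, inv_mul_cancel₀ two_ne_zero, one_smul,
      smul_smul]
    simp [c, mul_comm]
  have hMD_nonpos : MD ≤ 0 := by
    have hdiag : -MD = diagonal (Sum.elim 0 fun _ => (γ : ℂ)) := by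
      rw [hMD, ← fromBlocks_diagonal, fromBlocks_neg]
      simp [smul_one_eq_diagonal]
    rw [le_iff, zero_sub, hdiag]
    exact posSemidef_diagonal_iff.2 (by rintro (i | i) <;> simp [hγ.le])
  set u : Fin N ⊕ Fin N → ℂ := Sum.elim 1 0
  have hker : MD *ᵥ u = 0 := by
    ext (i | i) <;> simp [u, hMD, fromBlocks_mulVec]
  have hv : Sum.elim u u ≠ 0 := fun h => one_ne_zero (congrFun h (.inl (.inl ⟨0, hN⟩)))
  have hle : ∀ i, hHerm.eigenvalues i ≤ c :=
    hHerm.eigenvalues_le_of_le_smul_one (hH ▸ fromBlocks_le_smul_one hMD_nonpos hc)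
  have hex : ∃ i, hHerm.eigenvalues i = c :=
    hHerm.exists_eigenvalues_eq_of_mulVec_eq hv (hH ▸ fromBlocks_mulVec_elim_self hker _)
  have hsup : (⨆ i, hHerm.eigenvalues i) = c :=
    IsGreatest.csSup_eq (show IsGreatest (Set.range hHerm.eigenvalues) c from
      ⟨hex, Set.forall_mem_range.2 hle⟩)
  refine ⟨hle, hex, ?_⟩
  rw [hsup, max_eq_left (by positivity), hc_def]
  field_simp
end

section
/- Let λ, μ ∈ ℝ, v₀ ∈ ℂ, and let ψ : ℝ → ℂ be differentiable with ψ(q) = e^{−q} for all q ≥ 0. Define w(t, p) = ψ(p − λt) e^{iμt} v₀. Then w solves the transport equation ∂_t w = −λ ∂_p w + iμ w with initial data w(0, p) = ψ(p) v₀; and for every T ≥ 0 and every p ≥ max{λT, 0}, the original solution v(T) = e^{(λ+iμ)T} v₀ of dv/dt = (λ + iμ)v, v(0) = v₀, is recovered as v(T) = e^{p} w(T, p). -/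
/-!
Along the characteristics `p − λt = const` the transport equation reduces to `dw/dt = iμ w`, so
`w(t,p) = ψ(p − λt) e^{iμt} v₀` solves it by the chain rule. Where `p − λT ≥ 0` the profile is
`e^{−(p − λT)}`, and multiplying by `e^p` leaves exactly `e^{λT} e^{iμT} v₀ = e^{(λ+iμ)T} v₀`.
-/

open Complex

noncomputable def transportWave (ψ : ℝ → ℂ) (lam mu : ℝ) (v0 : ℂ) (t p : ℝ) : ℂ :=
  ψ (p - lam * t) * exp (I * mu * t) * v0

namespace transportWave

variable {ψ : ℝ → ℂ} {lam mu : ℝ} {v0 d : ℂ} {t p : ℝ}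

@[simp]
theorem zero_left (ψ : ℝ → ℂ) (lam mu : ℝ) (v0 : ℂ) (p : ℝ) :
    transportWave ψ lam mu v0 0 p = ψ p * v0 := by
  simp [transportWave]

theorem hasDerivAt_space (h : HasDerivAt ψ d (p - lam * t)) :
    HasDerivAt (transportWave ψ lam mu v0 t) (d * exp (I * mu * t) * v0) p :=
  ((h.comp_sub_const p (lam * t)).mul_const _).mul_const _

theorem hasDerivAt_time (h : HasDerivAt ψ d (p - lam * t)) :
    HasDerivAt (fun s => transportWave ψ lam mu v0 s p)
      (-lam * (d * exp (I * mu * t) * v0) + I * mu * transportWave ψ lam mu v0 t p) t := by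
  have hchar : HasDerivAt (fun s : ℝ => p - lam * s) (-lam) t := by
    simpa using ((hasDerivAt_id t).const_mul lam).const_sub p
  have hprofile : HasDerivAt (fun s => ψ (p - lam * s)) (-lam * d) t :=
    (h.scomp t hchar).congr_deriv (by simp [mul_comm])
  have hphase : HasDerivAt (fun s : ℝ => exp (I * mu * s)) (exp (I * mu * t) * (I * mu)) t :=
    ((hasDerivAt_id t).ofReal_comp.const_mul (I * mu)).cexp.congr_deriv (by simp)
  refine ((hprofile.mul hphase).mul_const v0).congr_deriv ?_
  rw [transportWave]
  ring

theorem hasDerivAt_time_eq_transport (h : DifferentiableAt ℝ ψ (p - lam * t)) :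
    HasDerivAt (fun s => transportWave ψ lam mu v0 s p)
      (-lam * deriv (transportWave ψ lam mu v0 t) p + I * mu * transportWave ψ lam mu v0 t p) t := by
  rw [(hasDerivAt_space h.hasDerivAt).deriv]
  exact hasDerivAt_time h.hasDerivAt

theorem exp_mul_eq_of_profile_eq_exp {T : ℝ} (h : ψ (p - lam * T) = Real.exp (-(p - lam * T))) :
    Real.exp p * transportWave ψ lam mu v0 T p = exp ((lam + I * mu) * T) * v0 := by
  simp only [transportWave, h, ofReal_exp, ← mul_assoc, ← exp_add]
  congr 2
  push_cast
  ring

end transportWave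

/-- The scalar model of Schrödingerization: `w(t,p) = ψ(p − λt) e^{iμt} v₀` (with `ψ` a
differentiable extension of `e^{−p}` from `p ≥ 0`) solves the transport equation
`∂_t w = −λ ∂_p w + iμ w` with data `w(0,p) = ψ(p) v₀`, and for `T ≥ 0`, `p ≥ max{λT, 0}`
the solution `v(T) = e^{(λ+iμ)T} v₀` of `dv/dt = (λ+iμ)v` is recovered as `e^p w(T,p)`. -/
theorem scalar_schrodingerization_recovery (lam mu : ℝ) (v0 : ℂ)
    (ψ : ℝ → ℂ) (hψdiff : Differentiable ℝ ψ)
    (hψ : ∀ q : ℝ, 0 ≤ q → ψ q = Real.exp (-q))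
    (w : ℝ → ℝ → ℂ)
    (hw : ∀ t p : ℝ, w t p = ψ (p - lam * t) * Complex.exp (Complex.I * mu * t) * v0) :
    (∀ p : ℝ, w 0 p = ψ p * v0) ∧
    (∀ t p : ℝ, HasDerivAt (fun s => w s p)
      ((-(lam : ℂ)) * deriv (fun q => w t q) p + Complex.I * mu * w t p) t) ∧
    (∀ T : ℝ, 0 ≤ T → ∀ p : ℝ, max (lam * T) 0 ≤ p →
      Complex.exp (((lam : ℂ) + Complex.I * mu) * T) * v0 = Real.exp p * w T p) := by
  obtain rfl : w = transportWave ψ lam mu v0 := funext₂ hw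
  refine ⟨transportWave.zero_left ψ lam mu v0, fun t p => ?_, fun T _ p hp => ?_⟩
  · exact transportWave.hasDerivAt_time_eq_transport (hψdiff _)
  · have hchar : 0 ≤ p - lam * T := sub_nonneg.mpr (le_of_max_le_left hp)
    exact (transportWave.exp_mul_eq_of_profile_eq_exp (hψ _ hchar)).symm
end

section
/- Let L be an N×N Hermitian positive semidefinite complex matrix, k > 0 real, and v ≠ 0 an eigenvector of L with L v = μ² v (μ² ≥ 0). Then L + ik²I is invertible, the complex-shifted preconditioned matrix (L + ik²I)⁻¹(L − k²I) satisfies (L + ik²I)⁻¹(L − k²I) v = ((μ² − k²)/(μ² + ik²)) v, and the modulus of this eigenvalue satisfies |(μ² − k²)/(μ² + ik²)| ≤ 1. -/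
open scoped Matrix ComplexOrder

/-!
For Hermitian `L` the quadratic form `x* L x` is real, so a null vector `x` of `L + cI` with
`Im c ≠ 0` would give the real number `x* L x = -c ‖x‖²`, forcing `x = 0`. The eigenvector `v`
of `L` is then an eigenvector of both `L + ik²I` and `L − k²I`, so of the preconditioned matrix
with the quotient of the two eigenvalues, and `|μ² − k²|² = μ⁴ + k⁴ − 2μ²k² ≤ |μ² + ik²|²`.
-/

namespace Matrix

variable {n : Type*} [Fintype n] [DecidableEq n]

theorem IsHermitian.isUnit_add_smul_one {A : Matrix n n ℂ} (hA : A.IsHermitian) {c : ℂ}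
    (hc : c.im ≠ 0) : IsUnit (A + c • 1) := by
  rw [isUnit_iff_isUnit_det, isUnit_iff_ne_zero, Ne, ← exists_mulVec_eq_zero_iff]
  rintro ⟨w, hw, hAw⟩
  have hAw' : A *ᵥ w = -c • w := by
    rw [add_mulVec, smul_mulVec, one_mulVec] at hAw
    rw [neg_smul, eq_neg_of_add_eq_zero_left hAw]
  have hquad : star w ⬝ᵥ A *ᵥ w = -c * (star w ⬝ᵥ w) := by
    rw [hAw', dotProduct_smul, smul_eq_mul]
  obtain ⟨hre, him⟩ := Complex.lt_def.mp (dotProduct_star_self_pos_iff.mpr hw)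
  have hreal := hA.im_star_dotProduct_mulVec_self w
  rw [RCLike.im_to_complex, hquad, Complex.mul_im, ← him, Complex.zero_im, mul_zero, zero_add,
    Complex.neg_im, neg_mul, neg_eq_zero] at hreal
  exact hc ((mul_eq_zero.mp hreal).resolve_right hre.ne')

theorem inv_mul_mulVec_eq_div_smul {K : Type*} [Field K] {A B : Matrix n n K} (hA : IsUnit A)
    {v : n → K} {a b : K} (hAv : A *ᵥ v = a • v) (hBv : B *ᵥ v = b • v) :
    (A⁻¹ * B) *ᵥ v = (b / a) • v := by
  have hinv : A⁻¹ *ᵥ v = a⁻¹ • v := by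
    rcases eq_or_ne a 0 with rfl | ha
    · have : v = 0 := mulVec_injective_iff_isUnit.mpr hA (by simpa using hAv)
      simp [this]
    · apply mulVec_injective_iff_isUnit.mpr hA
      rw [mulVec_mulVec, mul_nonsing_inv _ ((isUnit_iff_isUnit_det A).mp hA), one_mulVec,
        mulVec_smul, hAv, smul_smul, inv_mul_cancel₀ ha, one_smul]
  rw [← mulVec_mulVec, hBv, mulVec_smul, hinv, smul_smul, div_eq_mul_inv]

theorem add_smul_one_mulVec_of_mulVec_eq_smul {R : Type*} [CommRing R] {A : Matrix n n R}
    {v : n → R} {m : R} (h : A *ᵥ v = m • v) (c : R) : (A + c • 1) *ᵥ v = (m + c) • v := by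
  rw [add_mulVec, h, smul_mulVec, one_mulVec, add_smul]

theorem sub_smul_one_mulVec_of_mulVec_eq_smul {R : Type*} [CommRing R] {A : Matrix n n R}
    {v : n → R} {m : R} (h : A *ᵥ v = m • v) (c : R) : (A - c • 1) *ᵥ v = (m - c) • v := by
  rw [sub_mulVec, h, smul_mulVec, one_mulVec, sub_smul]

end Matrix

theorem Complex.norm_sub_div_add_I_mul_le_one {m t : ℝ} (hm : 0 ≤ m) (ht : 0 ≤ t) :
    ‖((m : ℂ) - t) / (m + I * t)‖ ≤ 1 := by
  rw [norm_div]
  refine div_le_one_of_le₀ ?_ (norm_nonneg _)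
  rw [← sq_le_sq₀ (norm_nonneg _) (norm_nonneg _), Complex.sq_norm, Complex.sq_norm,
    Complex.normSq_apply, Complex.normSq_apply]
  simp only [sub_re, ofReal_re, sub_im, ofReal_im, sub_self, mul_zero, add_zero, add_re, mul_re,
    I_re, zero_mul, I_im, add_im, mul_im, one_mul, zero_add]
  nlinarith [mul_nonneg hm ht]

theorem complex_shift_preconditioner_eigenvalue_general {N : ℕ}
    (L : Matrix (Fin N) (Fin N) ℂ) (hL : L.PosSemidef)
    (k : ℝ) (hk : 0 < k) (v : Fin N → ℂ)
    (musq : ℝ) (hmusq : 0 ≤ musq) (heig : L.mulVec v = (musq : ℂ) • v) :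
    IsUnit (L + (Complex.I * (k : ℂ) ^ 2) • 1) ∧
    ((L + (Complex.I * (k : ℂ) ^ 2) • 1)⁻¹ * (L - ((k : ℂ) ^ 2) • 1)).mulVec v
      = (((musq : ℂ) - (k : ℂ) ^ 2) / ((musq : ℂ) + Complex.I * (k : ℂ) ^ 2)) • v ∧
    ‖((musq : ℂ) - (k : ℂ) ^ 2) / ((musq : ℂ) + Complex.I * (k : ℂ) ^ 2)‖ ≤ 1 := by
  have hunit : IsUnit (L + (Complex.I * (k : ℂ) ^ 2) • 1) :=
    hL.isHermitian.isUnit_add_smul_one (by simpa [← Complex.ofReal_pow] using hk.ne')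
  refine ⟨hunit, ?_, ?_⟩
  · exact Matrix.inv_mul_mulVec_eq_div_smul hunit
      (Matrix.add_smul_one_mulVec_of_mulVec_eq_smul heig _)
      (Matrix.sub_smul_one_mulVec_of_mulVec_eq_smul heig _)
  · simpa using Complex.norm_sub_div_add_I_mul_le_one hmusq (sq_nonneg k)

/-- For Hermitian positive semidefinite `L`, `k > 0` and an eigenvector `L v = μ² v`,
the complex-shifted matrix `L + ik²I` is invertible, the preconditioned matrix
`(L + ik²I)⁻¹(L − k²I)` satisfies the eigenvalue relation with eigenvalue
`(μ² − k²)/(μ² + ik²)`, whose modulus is at most `1`. -/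
theorem complex_shift_preconditioner_eigenvalue {N : ℕ}
    (L : Matrix (Fin N) (Fin N) ℂ) (hL : L.PosSemidef)
    (k : ℝ) (hk : 0 < k) (v : Fin N → ℂ) (hv : v ≠ 0)
    (musq : ℝ) (hmusq : 0 ≤ musq) (heig : L.mulVec v = (musq : ℂ) • v) :
    IsUnit (L + (Complex.I * (k : ℂ) ^ 2) • 1) ∧
    ((L + (Complex.I * (k : ℂ) ^ 2) • 1)⁻¹ * (L - ((k : ℂ) ^ 2) • 1)).mulVec v
      = (((musq : ℂ) - (k : ℂ) ^ 2) / ((musq : ℂ) + Complex.I * (k : ℂ) ^ 2)) • v ∧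
    ‖((musq : ℂ) - (k : ℂ) ^ 2) / ((musq : ℂ) + Complex.I * (k : ℂ) ^ 2)‖ ≤ 1 :=
  complex_shift_preconditioner_eigenvalue_general L hL k hk v musq hmusq heig
end

section
/- The function ψ : ℝ → ℝ defined by ψ(p) = (−3 + 3e^{−1})p³ + (−5 + 4e^{−1})p² − p + 1 for p ∈ (−1, 0) and ψ(p) = e^{−|p|} otherwise is continuously differentiable on all of ℝ; in particular the piecewise definitions match in value and first derivative at p = −1 (where ψ(−1) = e^{−1}, ψ'(−1) = e^{−1}) and at p = 0 (where ψ(0) = 1, ψ'(0) = −1). -/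
/-!
On `[-1, 0]` the profile is a cubic whose two free coefficients are chosen so that its value and
slope match those of `e^p` at `-1` and of `e^{-p}` at `0`. A function glued at a point from two
differentiable pieces with matching values and slopes is differentiable there, and its derivative
is the corresponding gluing of the two derivatives, hence continuous when theirs are.
-/

open Set Filter Topology Real

section Gluing

variable {E : Type*} [NormedAddCommGroup E] [NormedSpace ℝ E]
  {g h g' h' : ℝ → E} {a : ℝ}

theorem hasDerivAt_ite_le (hg : ∀ x, HasDerivAt g (g' x) x) (hh : ∀ x, HasDerivAt h (h' x) x)
    (hval : g a = h a) (hder : g' a = h' a) (x : ℝ) :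
    HasDerivAt (fun y => if y ≤ a then g y else h y) (if x ≤ a then g' x else h' x) x := by
  rcases lt_trichotomy x a with hxa | rfl | hax
  · rw [if_pos hxa.le]
    refine (hg x).congr_of_eventuallyEq ?_
    filter_upwards [Iic_mem_nhds hxa] with y hy
    exact if_pos hy
  · rw [if_pos le_rfl]
    have hleft : HasDerivWithinAt (fun y => if y ≤ x then g y else h y) (g' x) (Iic x) x :=
      (hg x).hasDerivWithinAt.congr (fun y hy => if_pos hy) (if_pos le_rfl)
    have hright : HasDerivWithinAt (fun y => if y ≤ x then g y else h y) (g' x) (Ici x) x := by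
      refine (hder ▸ hh x).hasDerivWithinAt.congr (fun y hy => ?_) (by simp [hval])
      rcases (mem_Ici.1 hy).eq_or_lt with rfl | hxy
      · simp [hval]
      · exact if_neg hxy.not_ge
    simpa [Iic_union_Ici] using hleft.union hright
  · rw [if_neg hax.not_ge]
    refine (hh x).congr_of_eventuallyEq ?_
    filter_upwards [Ioi_mem_nhds hax] with y hy
    exact if_neg (not_le.2 hy)

theorem contDiff_one_of_hasDerivAt {f f' : ℝ → E} (hf : ∀ x, HasDerivAt f (f' x) x)
    (hf' : Continuous f') : ContDiff ℝ 1 f :=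
  contDiff_one_iff_deriv.2
    ⟨fun x => (hf x).differentiableAt, (funext fun x => (hf x).deriv) ▸ hf'⟩

end Gluing

namespace SmoothedProfile

noncomputable def cubic (p : ℝ) : ℝ :=
  (-3 + 3 * exp (-1)) * p ^ 3 + (-5 + 4 * exp (-1)) * p ^ 2 - p + 1

noncomputable def cubicDeriv (p : ℝ) : ℝ :=
  3 * (-3 + 3 * exp (-1)) * p ^ 2 + 2 * (-5 + 4 * exp (-1)) * p - 1

theorem hasDerivAt_cubic (p : ℝ) : HasDerivAt cubic (cubicDeriv p) p := by
  have h := ((((hasDerivAt_pow 3 p).const_mul (-3 + 3 * exp (-1))).add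
    ((hasDerivAt_pow 2 p).const_mul (-5 + 4 * exp (-1)))).sub (hasDerivAt_id p)).add_const 1
  unfold cubic cubicDeriv
  exact h.congr_deriv (by push_cast; ring)

theorem cubic_neg_one : cubic (-1) = exp (-1) := by
  simp only [cubic]
  ring

theorem cubicDeriv_neg_one : cubicDeriv (-1) = exp (-1) := by
  simp only [cubicDeriv]
  ring

theorem cubic_zero : cubic 0 = 1 := by
  simp [cubic]

theorem cubicDeriv_zero : cubicDeriv 0 = -1 := by
  simp [cubicDeriv]

noncomputable def profile (p : ℝ) : ℝ :=
  if p ≤ -1 then exp p else if p ≤ 0 then cubic p else exp (-p)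

noncomputable def profileDeriv (p : ℝ) : ℝ :=
  if p ≤ -1 then exp p else if p ≤ 0 then cubicDeriv p else -exp (-p)

theorem hasDerivAt_profile (p : ℝ) : HasDerivAt profile (profileDeriv p) p := by
  have hexp_neg (x : ℝ) : HasDerivAt (fun y => exp (-y)) (-exp (-x)) x := by
    simpa using (hasDerivAt_neg x).exp
  have hinner := hasDerivAt_ite_le (a := 0) hasDerivAt_cubic hexp_neg (by simp [cubic_zero])
    (by simp [cubicDeriv_zero])
  exact hasDerivAt_ite_le hasDerivAt_exp hinner (by simp [cubic_neg_one])
    (by simp [cubicDeriv_neg_one]) p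

theorem continuous_profileDeriv : Continuous profileDeriv := by
  have hcubicDeriv : Continuous cubicDeriv := by
    unfold cubicDeriv
    fun_prop
  refine continuous_exp.if_le ?_ continuous_id continuous_const ?_
  · refine hcubicDeriv.if_le (by fun_prop) continuous_id continuous_const ?_
    rintro x rfl
    simp [cubicDeriv_zero]
  · rintro x rfl
    simp [cubicDeriv_neg_one]

theorem eq_profile {ψ : ℝ → ℝ} (hmid : ∀ p ∈ Ioo (-1 : ℝ) 0, ψ p = cubic p)
    (hout : ∀ p : ℝ, p ∉ Ioo (-1 : ℝ) 0 → ψ p = exp (-|p|)) : ψ = profile := by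
  funext p
  unfold profile
  split_ifs with hp₁ hp₂
  · rw [hout p fun h => h.1.not_ge hp₁, abs_of_neg (by linarith), neg_neg]
  · rcases hp₂.eq_or_lt with rfl | hp₂
    · simp [hout 0 (fun h => h.2.false), cubic_zero]
    · exact hmid p ⟨not_le.1 hp₁, hp₂⟩
  · rw [hout p fun h => hp₂ h.2.le, abs_of_pos (not_le.1 hp₂)]

end SmoothedProfile

open SmoothedProfile

/-- The smoothed extension `ψ` of `e^{−|p|}` (cubic polynomial on `(−1,0)`, `e^{−|p|}`
elsewhere) is continuously differentiable on `ℝ`; in particular the pieces match in value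
and first derivative at `p = −1` and `p = 0`. -/
theorem smoothed_profile_C1 (ψ : ℝ → ℝ)
    (hmid : ∀ p ∈ Set.Ioo (-1 : ℝ) 0, ψ p =
      (-3 + 3 * Real.exp (-1)) * p ^ 3 + (-5 + 4 * Real.exp (-1)) * p ^ 2 - p + 1)
    (hout : ∀ p : ℝ, p ∉ Set.Ioo (-1 : ℝ) 0 → ψ p = Real.exp (-|p|)) :
    ContDiff ℝ 1 ψ ∧
    ψ (-1) = Real.exp (-1) ∧ deriv ψ (-1) = Real.exp (-1) ∧
    ψ 0 = 1 ∧ deriv ψ 0 = -1 := by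
  obtain rfl : ψ = profile := eq_profile hmid hout
  refine ⟨contDiff_one_of_hasDerivAt hasDerivAt_profile continuous_profileDeriv, ?_, ?_, ?_, ?_⟩
  · simp [profile]
  · simp [(hasDerivAt_profile _).deriv, profileDeriv]
  · simp [profile, cubic_zero]
  · simp [(hasDerivAt_profile _).deriv, profileDeriv, cubicDeriv_zero]
end
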